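/- arXiv:0803.0384 — 3 statements merged into one kernel-verified Lean document; each statement's English description precedes it below -/
import Mathlib

section
/- Let (J, ξ, α, g) be a cosymplectic structure on a Lie algebra 𝔤 with 𝔥 = ker α. Then the restriction D = ad_ξ|_𝔥 is a derivation of the Lie algebra 𝔥 that is skew-adjoint with respect to g|_𝔥 and commutes with J|_𝔥. -/
/-!
Since `J ξ = 0`, the Nijenhuis condition with first argument `ξ` collapses to
`J ⁅ξ, J x⁆ = J² ⁅ξ, x⁆`, and `J² = -1` on `ker α ⊇ ⁅𝔤, 𝔤⁆` turns this into `⁅ξ, J x⁆ = J ⁅ξ, x⁆`.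
Closedness of `ω` with first argument `ξ` says that `(a, b) ↦ ω(⁅ξ, a⁆, b)` is symmetric; writing
`x = J (-J x)` for `x ∈ ker α`, the commutation of `J` with `ad_ξ` and the `g`-skewness of `J`
turn this symmetry into the skew-adjointness of `ad_ξ`. The derivation property is the Jacobi
identity.
-/

structure IsAlmostContact {R V : Type*} [CommRing R] [AddCommGroup V] [Module R V]
    (J : V →ₗ[R] V) (ξ : V) (α : V →ₗ[R] R) : Prop where
  apply_xi : α ξ = 1
  J_J : ∀ x, J (J x) = -x + α x • ξ

namespace IsAlmostContact

variable {R V : Type*} [CommRing R] [AddCommGroup V] [Module R V]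
  {J : V →ₗ[R] V} {ξ : V} {α : V →ₗ[R] R}

/-- Both sides are `J³ x + J x`, expanded in the two possible ways. -/
theorem alpha_J_smul (h : IsAlmostContact J ξ α) (x : V) : α (J x) • ξ = α x • J ξ := by
  have h₁ := h.J_J (J x)
  rw [congrArg J (h.J_J x), map_add, map_neg, map_smul] at h₁
  exact (add_left_cancel h₁).symm

theorem J_J_xi (h : IsAlmostContact J ξ α) : J (J ξ) = 0 := by
  rw [h.J_J, h.apply_xi, one_smul, neg_add_cancel]

theorem alpha_J [NoZeroDivisors R] (h : IsAlmostContact J ξ α) (x : V) : α (J x) = 0 := by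
  have hξ : α (J ξ) = 0 := by
    have h₁ := congrArg α (h.alpha_J_smul (J ξ))
    rw [h.J_J_xi, map_zero, zero_smul, map_zero, map_smul, smul_eq_mul] at h₁
    exact mul_self_eq_zero.mp h₁.symm
  simpa [h.apply_xi, hξ] using congrArg α (h.alpha_J_smul x)

theorem J_xi [NoZeroDivisors R] (h : IsAlmostContact J ξ α) : J ξ = 0 := by
  simpa [h.alpha_J, h.apply_xi] using (h.alpha_J_smul ξ).symm

theorem J_J_of_alpha_eq_zero (h : IsAlmostContact J ξ α) {x : V} (hx : α x = 0) :
    J (J x) = -x := by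
  rw [h.J_J, hx, zero_smul, add_zero]

section Metric

variable [NoZeroDivisors R] {g : V →ₗ[R] V →ₗ[R] R}

theorem g_xi (h : IsAlmostContact J ξ α) (hg : ∀ x y, g (J x) (J y) = g x y - α x * α y)
    (x : V) : g x ξ = α x := by
  have h₁ := hg x ξ
  rw [h.J_xi, map_zero, h.apply_xi, mul_one] at h₁
  exact sub_eq_zero.mp h₁.symm

theorem g_J_left (h : IsAlmostContact J ξ α) (hg : ∀ x y, g (J x) (J y) = g x y - α x * α y)
    (a b : V) : g (J a) b = -g a (J b) := by
  have h₁ := hg a (J b)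
  rw [h.J_J, h.alpha_J, mul_zero, sub_zero, map_add, map_neg, map_smul, h.g_xi hg,
    h.alpha_J, smul_zero, add_zero] at h₁
  exact neg_eq_iff_eq_neg.mp h₁

end Metric

end IsAlmostContact

namespace IsAlmostContact

variable {R L : Type*} [CommRing R] [NoZeroDivisors R] [LieRing L] [LieAlgebra R L]
  {J : L →ₗ[R] L} {ξ : L} {α : L →ₗ[R] R}

theorem lie_xi_J (h : IsAlmostContact J ξ α) (hdα : ∀ x y : L, α ⁅x, y⁆ = 0)
    (hN : ∀ x y : L, ⁅J x, J y⁆ - J ⁅J x, y⁆ - J ⁅x, J y⁆ + J (J ⁅x, y⁆) = 0) (x : L) :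
    ⁅ξ, J x⁆ = J ⁅ξ, x⁆ := by
  have hJ : J ⁅ξ, J x⁆ = -⁅ξ, x⁆ := by
    have h₁ := hN ξ x
    simp only [h.J_xi, zero_lie, map_zero, zero_sub, h.J_J_of_alpha_eq_zero (hdα _ _)] at h₁
    linear_combination (norm := abel) -h₁
  have h₂ := congrArg J hJ
  rwa [h.J_J_of_alpha_eq_zero (hdα _ _), map_neg, neg_inj] at h₂

variable {g : L →ₗ[R] L →ₗ[R] R}

theorem g_J_lie_xi_comm (h : IsAlmostContact J ξ α)
    (hg : ∀ x y, g (J x) (J y) = g x y - α x * α y)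
    (hdω : ∀ x y z : L, -g (J ⁅x, y⁆) z + g (J ⁅x, z⁆) y - g (J ⁅y, z⁆) x = 0) (a b : L) :
    g (J ⁅ξ, a⁆) b = g (J ⁅ξ, b⁆) a := by
  have h₁ := hdω ξ a b
  rwa [h.g_xi hg, h.alpha_J, sub_zero, neg_add_eq_zero] at h₁

theorem g_lie_xi_skew (h : IsAlmostContact J ξ α)
    (hg : ∀ x y, g (J x) (J y) = g x y - α x * α y) (hgsymm : ∀ x y, g x y = g y x)
    (hdα : ∀ x y : L, α ⁅x, y⁆ = 0)
    (hN : ∀ x y : L, ⁅J x, J y⁆ - J ⁅J x, y⁆ - J ⁅x, J y⁆ + J (J ⁅x, y⁆) = 0)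
    (hdω : ∀ x y z : L, -g (J ⁅x, y⁆) z + g (J ⁅x, z⁆) y - g (J ⁅y, z⁆) x = 0)
    {x : L} (hx : α x = 0) (y : L) : g ⁅ξ, x⁆ y = -g x ⁅ξ, y⁆ := by
  have hJx : J (-J x) = x := by rw [map_neg, h.J_J_of_alpha_eq_zero hx, neg_neg]
  calc g ⁅ξ, x⁆ y = g (J ⁅ξ, -J x⁆) y := by rw [← h.lie_xi_J hdα hN, hJx]
    _ = g (J ⁅ξ, y⁆) (-J x) := h.g_J_lie_xi_comm hg hdω _ _
    _ = -g x ⁅ξ, y⁆ := by rw [h.g_J_left hg, hJx, hgsymm]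

end IsAlmostContact

theorem stmt4_general {L : Type*} [LieRing L] [LieAlgebra ℝ L]
    (J : L →ₗ[ℝ] L) (ξ : L) (α : L →ₗ[ℝ] ℝ) (g : L →ₗ[ℝ] L →ₗ[ℝ] ℝ)
    (hgsymm : ∀ x y, g x y = g y x)
    (hαξ : α ξ = 1)
    (hdα : ∀ x y : L, α ⁅x, y⁆ = 0)
    (hJ : ∀ x, J (J x) = -x + α x • ξ)
    (hN : ∀ x y : L, ⁅J x, J y⁆ - J ⁅J x, y⁆ - J ⁅x, J y⁆ + J (J ⁅x, y⁆) = 0)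
    (hcompat : ∀ x y, g (J x) (J y) = g x y - α x * α y)
    (hdω : ∀ x y z : L, -g (J ⁅x, y⁆) z + g (J ⁅x, z⁆) y - g (J ⁅y, z⁆) x = 0) :
    (∀ x y : L, α x = 0 → α y = 0 → ⁅ξ, ⁅x, y⁆⁆ = ⁅⁅ξ, x⁆, y⁆ + ⁅x, ⁅ξ, y⁆⁆) ∧
    (∀ x y : L, α x = 0 → α y = 0 → g ⁅ξ, x⁆ y = -g x ⁅ξ, y⁆) ∧
    (∀ x : L, α x = 0 → ⁅ξ, J x⁆ = J ⁅ξ, x⁆) := by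
  have h : IsAlmostContact J ξ α := ⟨hαξ, hJ⟩
  exact ⟨fun x y _ _ => leibniz_lie ξ x y,
    fun _ y hx _ => h.g_lie_xi_skew hcompat hgsymm hdα hN hdω hx y,
    fun x _ => h.lie_xi_J hdα hN x⟩

/-- for a cosymplectic structure `(J, ξ, α, g)` on a Lie algebra `𝔤`
with `𝔥 = ker α`, the restriction `D = ad_ξ|𝔥` is a derivation of `𝔥` which is
skew-adjoint with respect to `g|𝔥` and commutes with `J|𝔥`. -/
theorem stmt4 {L : Type*} [LieRing L] [LieAlgebra ℝ L]
    (n : ℕ) (hdim : Module.finrank ℝ L = 2 * n + 1)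
    (J : L →ₗ[ℝ] L) (ξ : L) (α : L →ₗ[ℝ] ℝ) (g : L →ₗ[ℝ] L →ₗ[ℝ] ℝ)
    (hgsymm : ∀ x y, g x y = g y x)
    (hgpos : ∀ x : L, x ≠ 0 → 0 < g x x)
    (hξ : ξ ≠ 0)
    (hαξ : α ξ = 1)
    (hdα : ∀ x y : L, α ⁅x, y⁆ = 0)
    (hJ : ∀ x, J (J x) = -x + α x • ξ)
    (hN : ∀ x y : L, ⁅J x, J y⁆ - J ⁅J x, y⁆ - J ⁅x, J y⁆ + J (J ⁅x, y⁆) = 0)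
    (hcompat : ∀ x y, g (J x) (J y) = g x y - α x * α y)
    (hdω : ∀ x y z : L, -g (J ⁅x, y⁆) z + g (J ⁅x, z⁆) y - g (J ⁅y, z⁆) x = 0) :
    (∀ x y : L, α x = 0 → α y = 0 → ⁅ξ, ⁅x, y⁆⁆ = ⁅⁅ξ, x⁆, y⁆ + ⁅x, ⁅ξ, y⁆⁆) ∧
    (∀ x y : L, α x = 0 → α y = 0 → g ⁅ξ, x⁆ y = -g x ⁅ξ, y⁆) ∧
    (∀ x : L, α x = 0 → ⁅ξ, J x⁆ = J ⁅ξ, x⁆) :=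
  stmt4_general J ξ α g hgsymm hαξ hdα hJ hN hcompat hdω
end

section
/- Let (J, ξ, α, g) be a cosymplectic structure on a Lie algebra 𝔤 and 𝔥 = ker α. Then (J|_𝔥, g|_𝔥) is a Kähler structure on the Lie algebra 𝔥: J|_𝔥 is an integrable complex structure compatible with g|_𝔥, and the 2-form ω_𝔥(X,Y) = g(JX,Y) on 𝔥 is closed with respect to the Chevalley–Eilenberg differential of 𝔥. -/
/-! On `ker α` the structure equation `J² = -Id + α ⊗ ξ` reduces to `J² = -Id`; applying it
to `J x` shows `α (J x) • ξ = 0`, so `J` preserves `ker α`. Since `dα = 0`, every bracket lies in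
`ker α`, so the term `J² ⁅x, y⁆` of the Nijenhuis tensor becomes `-⁅x, y⁆`. Compatibility and
closedness of the restricted data are the ambient ones with the `α`-terms vanishing. -/

section AlmostContact

variable {R M : Type*} [CommRing R] [AddCommGroup M] [Module R M]
  {J : M →ₗ[R] M} {ξ : M} {α : M →ₗ[R] R}

theorem apply_apply_eq_neg_of_apply_eq_zero (hJ : ∀ x, J (J x) = -x + α x • ξ)
    {x : M} (hx : α x = 0) : J (J x) = -x := by
  rw [hJ, hx, zero_smul, add_zero]

theorem apply_map_eq_zero_of_apply_eq_zero [IsDomain R] [Module.IsTorsionFree R M] (hξ : ξ ≠ 0)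
    (hJ : ∀ x, J (J x) = -x + α x • ξ) {x : M} (hx : α x = 0) : α (J x) = 0 := by
  have hcube : J (J (J x)) = -J x := by
    rw [apply_apply_eq_neg_of_apply_eq_zero hJ hx, map_neg]
  have hsmul : α (J x) • ξ = 0 := by
    rw [hJ (J x)] at hcube
    linear_combination (norm := module) hcube
  exact (smul_eq_zero_iff_left hξ).mp hsmul

end AlmostContact

theorem nijenhuis_eq_zero_of_bracket_mem_ker {R L : Type*} [CommRing R] [LieRing L]
    [LieAlgebra R L] {J : L →ₗ[R] L} {ξ : L} {α : L →ₗ[R] R}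
    (hJ : ∀ x, J (J x) = -x + α x • ξ) (hdα : ∀ x y : L, α ⁅x, y⁆ = 0)
    (hN : ∀ x y : L, ⁅J x, J y⁆ - J ⁅J x, y⁆ - J ⁅x, J y⁆ + J (J ⁅x, y⁆) = 0) (x y : L) :
    ⁅J x, J y⁆ - J ⁅J x, y⁆ - J ⁅x, J y⁆ - ⁅x, y⁆ = 0 := by
  have h := hN x y
  rw [apply_apply_eq_neg_of_apply_eq_zero hJ (hdα x y)] at h
  linear_combination (norm := module) h

theorem stmt5_general {L : Type*} [LieRing L] [LieAlgebra ℝ L]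
    (J : L →ₗ[ℝ] L) (ξ : L) (α : L →ₗ[ℝ] ℝ) (g : L →ₗ[ℝ] L →ₗ[ℝ] ℝ)
    (hξ : ξ ≠ 0)
    (hdα : ∀ x y : L, α ⁅x, y⁆ = 0)
    (hJ : ∀ x, J (J x) = -x + α x • ξ)
    (hN : ∀ x y : L, ⁅J x, J y⁆ - J ⁅J x, y⁆ - J ⁅x, J y⁆ + J (J ⁅x, y⁆) = 0)
    (hcompat : ∀ x y, g (J x) (J y) = g x y - α x * α y)
    (hdω : ∀ x y z : L, -g (J ⁅x, y⁆) z + g (J ⁅x, z⁆) y - g (J ⁅y, z⁆) x = 0) :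
    (∀ x : L, α x = 0 → α (J x) = 0) ∧
    (∀ x : L, α x = 0 → J (J x) = -x) ∧
    (∀ x y : L, α x = 0 → α y = 0 →
      ⁅J x, J y⁆ - J ⁅J x, y⁆ - J ⁅x, J y⁆ - ⁅x, y⁆ = 0) ∧
    (∀ x y : L, α x = 0 → α y = 0 → g (J x) (J y) = g x y) ∧
    (∀ x y z : L, α x = 0 → α y = 0 → α z = 0 →
      g (J ⁅x, y⁆) z - g (J ⁅x, z⁆) y + g (J ⁅y, z⁆) x = 0) := by
  refine ⟨fun x hx => apply_map_eq_zero_of_apply_eq_zero hξ hJ hx,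
    fun x hx => apply_apply_eq_neg_of_apply_eq_zero hJ hx,
    fun x y _ _ => nijenhuis_eq_zero_of_bracket_mem_ker hJ hdα hN x y,
    fun x y hx _ => ?_, fun x y z _ _ _ => ?_⟩
  · rw [hcompat, hx, zero_mul, sub_zero]
  · linear_combination -hdω x y z

/-- for a cosymplectic structure `(J, ξ, α, g)` on a Lie algebra `𝔤`,
the hyperplane `𝔥 = ker α` with the restricted data `(J|𝔥, g|𝔥)` is a Kähler Lie
algebra: `J|𝔥` is an integrable complex structure compatible with `g|𝔥` and the
fundamental `2`-form `ω_𝔥(X,Y) = g(JX,Y)` of `𝔥` is closed. -/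
theorem stmt5 {L : Type*} [LieRing L] [LieAlgebra ℝ L]
    (n : ℕ) (hdim : Module.finrank ℝ L = 2 * n + 1)
    (J : L →ₗ[ℝ] L) (ξ : L) (α : L →ₗ[ℝ] ℝ) (g : L →ₗ[ℝ] L →ₗ[ℝ] ℝ)
    (hgsymm : ∀ x y, g x y = g y x)
    (hgpos : ∀ x : L, x ≠ 0 → 0 < g x x)
    (hξ : ξ ≠ 0)
    (hαξ : α ξ = 1)
    (hdα : ∀ x y : L, α ⁅x, y⁆ = 0)
    (hJ : ∀ x, J (J x) = -x + α x • ξ)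
    (hN : ∀ x y : L, ⁅J x, J y⁆ - J ⁅J x, y⁆ - J ⁅x, J y⁆ + J (J ⁅x, y⁆) = 0)
    (hcompat : ∀ x y, g (J x) (J y) = g x y - α x * α y)
    (hdω : ∀ x y z : L, -g (J ⁅x, y⁆) z + g (J ⁅x, z⁆) y - g (J ⁅y, z⁆) x = 0) :
    (∀ x : L, α x = 0 → α (J x) = 0) ∧
    (∀ x : L, α x = 0 → J (J x) = -x) ∧
    (∀ x y : L, α x = 0 → α y = 0 →
      ⁅J x, J y⁆ - J ⁅J x, y⁆ - J ⁅x, J y⁆ - ⁅x, y⁆ = 0) ∧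
    (∀ x y : L, α x = 0 → α y = 0 → g (J x) (J y) = g x y) ∧
    (∀ x y z : L, α x = 0 → α y = 0 → α z = 0 →
      g (J ⁅x, y⁆) z - g (J ⁅x, z⁆) y + g (J ⁅y, z⁆) x = 0) :=
  stmt5_general J ξ α g hξ hdα hJ hN hcompat hdω
end

section
/- Let 𝔥 be a 2n-dimensional Lie algebra with a Kähler structure (J, g) and let D be a derivation of 𝔥 that is skew-adjoint with respect to g and commutes with J. Define 𝔤 = ℝξ ⊕ 𝔥 with bracket [X,Y]_𝔤 = [X,Y]_𝔥, [ξ, X]_𝔤 = D(X) for X, Y ∈ 𝔥, extend J to 𝔤 by Jξ = 0, let α be the dual of ξ (α(ξ)=1, α|_𝔥 = 0), and extend g so that ξ is unit and orthogonal to 𝔥. Then (J, ξ, α, g) is a cosymplectic structure on the Lie algebra 𝔤. -/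
/-- The bracket of the semidirect sum `𝔤 = ℝξ ⊕_D 𝔥`, where `ξ = (1,0)`:
`[(a,x),(c,y)] = (0, [x,y] + a • D y - c • D x)`. -/
def sdBracket {H : Type*} [LieRing H] [LieAlgebra ℝ H] (D : H →ₗ[ℝ] H) :
    ℝ × H → ℝ × H → ℝ × H :=
  fun p q => (0, ⁅p.2, q.2⁆ + p.1 • D q.2 - q.1 • D p.2)

/-- The extension of `J` to `𝔤 = ℝξ ⊕ 𝔥` with `Jξ = 0`. -/
def sdJ {H : Type*} [AddCommGroup H] [Module ℝ H] (J : H →ₗ[ℝ] H) :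
    ℝ × H → ℝ × H :=
  fun p => (0, J p.2)

/-- The extension of the inner product `g` to `𝔤 = ℝξ ⊕ 𝔥` making `ξ = (1,0)`
unit and orthogonal to `𝔥`. -/
def sdG {H : Type*} (g : H → H → ℝ) : ℝ × H → ℝ × H → ℝ :=
  fun p q => p.1 * q.1 + g p.2 q.2

/-! On `𝔥` every identity is the Kähler structure itself, and `dα = 0` because `[𝔤, 𝔤] ⊆ 𝔥`.
The terms involving `ξ` are handled by `D`: the Jacobi identity for them is the derivation
property; in `N_J` they cancel because `D` commutes with `J`; and in `dω` they are
`ω(D y, z) - ω(D z, y)`, which vanishes because `D`, being `g`-skew and commuting with `J`,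
is `ω`-skew. -/

section KahlerForm

variable {H : Type*} [AddCommGroup H] [Module ℝ H] {J D : H →ₗ[ℝ] H} {g : H →ₗ[ℝ] H →ₗ[ℝ] ℝ}

theorem kahlerForm_antisymm (hgsymm : ∀ x y, g x y = g y x) (hJ2 : ∀ x, J (J x) = -x)
    (hcompat : ∀ x y, g (J x) (J y) = g x y) (x y : H) : g (J x) y = -g (J y) x := by
  rw [← hcompat, hJ2, map_neg, LinearMap.neg_apply, hgsymm]

theorem kahlerForm_derivation_symm (hgsymm : ∀ x y, g x y = g y x) (hJ2 : ∀ x, J (J x) = -x)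
    (hcompat : ∀ x y, g (J x) (J y) = g x y) (hskew : ∀ x y : H, g (D x) y = -g x (D y))
    (hDJ : ∀ x : H, D (J x) = J (D x)) (y z : H) : g (J (D y)) z = g (J (D z)) y := by
  rw [← hDJ, hskew, kahlerForm_antisymm hgsymm hJ2 hcompat, neg_neg]

theorem sdJ_sdJ (hJ2 : ∀ x, J (J x) = -x) (p : ℝ × H) :
    sdJ J (sdJ J p) = -p + p.1 • ((1 : ℝ), (0 : H)) := by
  obtain ⟨a, x⟩ := p
  simp [sdJ, hJ2]

theorem sdG_sdJ_sdJ (hcompat : ∀ x y, g (J x) (J y) = g x y) (p q : ℝ × H) :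
    sdG (fun x y => g x y) (sdJ J p) (sdJ J q) = sdG (fun x y => g x y) p q - p.1 * q.1 := by
  simp only [sdG, sdJ, hcompat]
  ring

end KahlerForm

section Semidirect

variable {H : Type*} [LieRing H] [LieAlgebra ℝ H]

theorem sdBracket_fst (D : H →ₗ[ℝ] H) (p q : ℝ × H) : (sdBracket D p q).1 = 0 := rfl

theorem sdBracket_anticomm (D : H →ₗ[ℝ] H) (p q : ℝ × H) :
    sdBracket D p q = -sdBracket D q p := by
  simp only [sdBracket, Prod.neg_mk, neg_zero, Prod.mk.injEq, true_and]
  rw [← lie_skew]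
  abel

theorem sdBracket_jacobi (D : H →ₗ[ℝ] H) (hder : ∀ x y : H, D ⁅x, y⁆ = ⁅D x, y⁆ + ⁅x, D y⁆)
    (p q r : ℝ × H) :
    sdBracket D (sdBracket D p q) r + sdBracket D (sdBracket D q r) p +
      sdBracket D (sdBracket D r p) q = 0 := by
  obtain ⟨a, x⟩ := p; obtain ⟨c, y⟩ := q; obtain ⟨e, z⟩ := r
  simp only [sdBracket, Prod.mk_add_mk, add_zero, zero_smul, Prod.mk_eq_zero, true_and]
  simp only [add_lie, sub_lie, smul_lie, map_add, map_sub, map_smul, hder]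
  linear_combination (norm := module) -lie_jacobi x y z + (lie_skew z ⁅x, y⁆).symm
    + (lie_skew x ⁅y, z⁆).symm + (lie_skew y ⁅z, x⁆).symm
    + e • lie_skew (D y) x + a • lie_skew (D z) y + c • lie_skew (D x) z

theorem sdJ_nijenhuis (J D : H →ₗ[ℝ] H) (hJ2 : ∀ x, J (J x) = -x)
    (hNJ : ∀ x y : H, ⁅J x, J y⁆ - J ⁅J x, y⁆ - J ⁅x, J y⁆ - ⁅x, y⁆ = 0)
    (hDJ : ∀ x : H, D (J x) = J (D x)) (p q : ℝ × H) :
    sdBracket D (sdJ J p) (sdJ J q) - sdJ J (sdBracket D (sdJ J p) q) -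
      sdJ J (sdBracket D p (sdJ J q)) + sdJ J (sdJ J (sdBracket D p q)) = 0 := by
  obtain ⟨a, x⟩ := p; obtain ⟨c, y⟩ := q
  simp only [sdBracket, sdJ, Prod.mk_add_mk, Prod.mk_sub_mk, zero_smul, add_zero, sub_zero,
    Prod.mk_eq_zero, true_and]
  simp only [map_add, map_sub, map_smul, hDJ, hJ2]
  linear_combination (norm := module) hNJ x y

theorem sdG_kahlerForm_closed {J D : H →ₗ[ℝ] H} {g : H →ₗ[ℝ] H →ₗ[ℝ] ℝ}
    (hgsymm : ∀ x y, g x y = g y x) (hJ2 : ∀ x, J (J x) = -x)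
    (hcompat : ∀ x y, g (J x) (J y) = g x y)
    (hclosed : ∀ x y z : H, g (J ⁅x, y⁆) z - g (J ⁅x, z⁆) y + g (J ⁅y, z⁆) x = 0)
    (hskew : ∀ x y : H, g (D x) y = -g x (D y)) (hDJ : ∀ x : H, D (J x) = J (D x))
    (p q r : ℝ × H) :
    sdG (fun x y => g x y) (sdJ J (sdBracket D p q)) r -
      sdG (fun x y => g x y) (sdJ J (sdBracket D p r)) q +
      sdG (fun x y => g x y) (sdJ J (sdBracket D q r)) p = 0 := by
  obtain ⟨a, x⟩ := p; obtain ⟨c, y⟩ := q; obtain ⟨e, z⟩ := r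
  have hsymm := kahlerForm_derivation_symm hgsymm hJ2 hcompat hskew hDJ
  simp only [sdG, sdJ, sdBracket, map_add, map_sub, map_smul, LinearMap.add_apply,
    LinearMap.sub_apply, LinearMap.smul_apply, smul_eq_mul, zero_mul, zero_add]
  linear_combination hclosed x y z + a * hsymm y z - c * hsymm x z + e * hsymm x y

end Semidirect

theorem stmt6_general {H : Type*} [LieRing H] [LieAlgebra ℝ H]
    (J : H →ₗ[ℝ] H) (g : H →ₗ[ℝ] H →ₗ[ℝ] ℝ) (D : H →ₗ[ℝ] H)
    (hgsymm : ∀ x y, g x y = g y x)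
    (hJ2 : ∀ x, J (J x) = -x)
    (hNJ : ∀ x y : H, ⁅J x, J y⁆ - J ⁅J x, y⁆ - J ⁅x, J y⁆ - ⁅x, y⁆ = 0)
    (hcompat : ∀ x y, g (J x) (J y) = g x y)
    (hclosed : ∀ x y z : H, g (J ⁅x, y⁆) z - g (J ⁅x, z⁆) y + g (J ⁅y, z⁆) x = 0)
    (hder : ∀ x y : H, D ⁅x, y⁆ = ⁅D x, y⁆ + ⁅x, D y⁆)
    (hskew : ∀ x y : H, g (D x) y = -g x (D y))
    (hDJ : ∀ x : H, D (J x) = J (D x)) :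
    -- the bracket is skew-symmetric and satisfies the Jacobi identity
    (∀ p q : ℝ × H, sdBracket D p q = - sdBracket D q p) ∧
    (∀ p q r : ℝ × H,
      sdBracket D (sdBracket D p q) r + sdBracket D (sdBracket D q r) p +
        sdBracket D (sdBracket D r p) q = 0) ∧
    -- dα = 0
    (∀ p q : ℝ × H, (sdBracket D p q).1 = 0) ∧
    -- J² = -Id + α ⊗ ξ
    (∀ p : ℝ × H, sdJ J (sdJ J p) = -p + p.1 • ((1 : ℝ), (0 : H))) ∧
    -- α(ξ) = 1
    ((1 : ℝ), (0 : H)).1 = 1 ∧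
    -- N_J = 0
    (∀ p q : ℝ × H,
      sdBracket D (sdJ J p) (sdJ J q) - sdJ J (sdBracket D (sdJ J p) q) -
        sdJ J (sdBracket D p (sdJ J q)) + sdJ J (sdJ J (sdBracket D p q)) = 0) ∧
    -- g(J·,J·) = g - α ⊗ α
    (∀ p q : ℝ × H, sdG (fun x y => g x y) (sdJ J p) (sdJ J q) =
      sdG (fun x y => g x y) p q - p.1 * q.1) ∧
    -- dω = 0
    (∀ p q r : ℝ × H,
      sdG (fun x y => g x y) (sdJ J (sdBracket D p q)) r -
        sdG (fun x y => g x y) (sdJ J (sdBracket D p r)) q +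
        sdG (fun x y => g x y) (sdJ J (sdBracket D q r)) p = 0) :=
  ⟨sdBracket_anticomm D, sdBracket_jacobi D hder, sdBracket_fst D, sdJ_sdJ hJ2, rfl,
    sdJ_nijenhuis J D hJ2 hNJ hDJ, sdG_sdJ_sdJ hcompat,
    sdG_kahlerForm_closed hgsymm hJ2 hcompat hclosed hskew hDJ⟩

/-- given a Kähler Lie algebra `(𝔥, J, g)` and a skew-adjoint
derivation `D` of `𝔥` commuting with `J`, the semidirect sum `𝔤 = ℝξ ⊕_D 𝔥`,
with `J` extended by `Jξ = 0`, `α` the dual of `ξ` and `g` extended so that `ξ`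
is unit and orthogonal to `𝔥`, is a cosymplectic Lie algebra: the bracket
satisfies the Jacobi identity, `dα = 0`, `J² = -Id + α ⊗ ξ`, `α(ξ) = 1`,
`N_J = 0`, `g(J·,J·) = g - α ⊗ α`, and the fundamental `2`-form is closed. -/
theorem stmt6 {H : Type*} [LieRing H] [LieAlgebra ℝ H]
    (J : H →ₗ[ℝ] H) (g : H →ₗ[ℝ] H →ₗ[ℝ] ℝ) (D : H →ₗ[ℝ] H)
    (hgsymm : ∀ x y, g x y = g y x)
    (hgpos : ∀ x : H, x ≠ 0 → 0 < g x x)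
    (hJ2 : ∀ x, J (J x) = -x)
    (hNJ : ∀ x y : H, ⁅J x, J y⁆ - J ⁅J x, y⁆ - J ⁅x, J y⁆ - ⁅x, y⁆ = 0)
    (hcompat : ∀ x y, g (J x) (J y) = g x y)
    (hclosed : ∀ x y z : H, g (J ⁅x, y⁆) z - g (J ⁅x, z⁆) y + g (J ⁅y, z⁆) x = 0)
    (hder : ∀ x y : H, D ⁅x, y⁆ = ⁅D x, y⁆ + ⁅x, D y⁆)
    (hskew : ∀ x y : H, g (D x) y = -g x (D y))
    (hDJ : ∀ x : H, D (J x) = J (D x)) :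
    -- the bracket is skew-symmetric and satisfies the Jacobi identity
    (∀ p q : ℝ × H, sdBracket D p q = - sdBracket D q p) ∧
    (∀ p q r : ℝ × H,
      sdBracket D (sdBracket D p q) r + sdBracket D (sdBracket D q r) p +
        sdBracket D (sdBracket D r p) q = 0) ∧
    -- dα = 0
    (∀ p q : ℝ × H, (sdBracket D p q).1 = 0) ∧
    -- J² = -Id + α ⊗ ξ
    (∀ p : ℝ × H, sdJ J (sdJ J p) = -p + p.1 • ((1 : ℝ), (0 : H))) ∧
    -- α(ξ) = 1
    ((1 : ℝ), (0 : H)).1 = 1 ∧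
    -- N_J = 0
    (∀ p q : ℝ × H,
      sdBracket D (sdJ J p) (sdJ J q) - sdJ J (sdBracket D (sdJ J p) q) -
        sdJ J (sdBracket D p (sdJ J q)) + sdJ J (sdJ J (sdBracket D p q)) = 0) ∧
    -- g(J·,J·) = g - α ⊗ α
    (∀ p q : ℝ × H, sdG (fun x y => g x y) (sdJ J p) (sdJ J q) =
      sdG (fun x y => g x y) p q - p.1 * q.1) ∧
    -- dω = 0
    (∀ p q r : ℝ × H,
      sdG (fun x y => g x y) (sdJ J (sdBracket D p q)) r -
        sdG (fun x y => g x y) (sdJ J (sdBracket D p r)) q +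
        sdG (fun x y => g x y) (sdJ J (sdBracket D q r)) p = 0) :=
  stmt6_general J g D hgsymm hJ2 hNJ hcompat hclosed hder hskew hDJ
end
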